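/- arXiv:0801.1196 — 2 statements merged into one kernel-verified Lean document; each statement's English description precedes it below -/
import Mathlib

section
/- Let R be a coherent set of really desirable gambles on Ω and let 𝓑 be a partition of Ω refining {B, Bᶜ} such that R is 𝓑-conglomerable. Then for any gamble f with P̲(f|C) ∈ ℝ for all C ∈ 𝓑, the conglomerative property holds: P̲(f|B) ≥ P̲(g|B), where g is the gamble defined by g(ω) = P̲(f|C) for ω ∈ C, C ∈ 𝓑. -/
open Set

def Coherent {Ω : Type*} (R : Set (Ω → ℝ)) : Prop :=
  (∀ f : Ω → ℝ, f ≤ 0 → f ≠ 0 → f ∉ R) ∧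
  (∀ f : Ω → ℝ, 0 ≤ f → f ∈ R) ∧
  (∀ f g : Ω → ℝ, f ∈ R → g ∈ R → f + g ∈ R) ∧
  (∀ (f : Ω → ℝ) (l : ℝ), 0 ≤ l → f ∈ R → l • f ∈ R)

/-- Conditional lower prevision `P̲(f|B) = sup {α : I_B (f - α) ∈ R}`, as an extended real. -/
noncomputable def lowPrev {Ω : Type*} (R : Set (Ω → ℝ)) (B : Set Ω) (f : Ω → ℝ) : EReal :=
  sSup ((fun α : ℝ => (α : EReal)) '' {α : ℝ | B.indicator (fun ω => f ω - α) ∈ R})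


/-- The conglomerative property: if `𝓑` is a partition of `Ω` refining `{B, Bᶜ}` and `R` is
`𝓑`-conglomerable, then `P̲(f|B) ≥ P̲(g|B)` where `g` takes on each `C ∈ 𝓑` the (finite) value
`P̲(f|C)`. -/
theorem lowPrev_conglomerative {Ω : Type*} (R : Set (Ω → ℝ)) (hR : Coherent R)
    (B : Set Ω) (hB : B.Nonempty) (𝓑 : Set (Set Ω))
    (hne : ∀ C ∈ 𝓑, (C : Set Ω).Nonempty)
    (hdisj : 𝓑.PairwiseDisjoint id)
    (hcover : ⋃₀ 𝓑 = Set.univ)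
    (hrefine : ∀ C ∈ 𝓑, C ⊆ B ∨ C ⊆ Bᶜ)
    (hcong : ∀ f : Ω → ℝ, (∀ C ∈ 𝓑, C.indicator f ∈ R) → f ∈ R)
    (f g : Ω → ℝ)
    (hfin : ∀ C ∈ 𝓑, ∃ r : ℝ, lowPrev R C f = r)
    (hg : ∀ C ∈ 𝓑, ∀ ω ∈ C, (g ω : EReal) = lowPrev R C f)
    (hfB : ∃ r : ℝ, lowPrev R B f = r)
    (hgB : lowPrev R B g ≠ ⊥) :
    lowPrev R B g ≤ lowPrev R B f := by
  obtain ⟨r, hr⟩ := hfB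
  rw [hr, lowPrev]
  apply sSup_le
  rintro x ⟨α, hα, rfl⟩
  simp only [Set.mem_setOf_eq] at hα
  rw [EReal.coe_le_coe_iff]
  apply le_of_forall_pos_le_add
  intro ε hε
  rw [← sub_le_iff_le_add]
  -- it suffices to show α - ε is in the set defining lowPrev R B f
  have key : B.indicator (fun ω => f ω - (α - ε)) ∈ R := by
    -- first: the gamble I_B (f - g + ε) is in R, by conglomerability
    have hφ : B.indicator (fun ω => f ω - g ω + ε) ∈ R := by
      apply hcong
      intro C hC
      rcases hrefine C hC with hsub | hsub
      · -- C ⊆ B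
        obtain ⟨rC, hrC⟩ := hfin C hC
        have hnest : C.indicator (B.indicator (fun ω => f ω - g ω + ε)) =
            C.indicator (fun ω => f ω - rC + ε) := by
          funext ω
          by_cases hω : ω ∈ C
          · have hωB : ω ∈ B := hsub hω
            have hgω : g ω = rC := by
              have := hg C hC ω hω
              rw [hrC] at this
              exact_mod_cast this
            simp [Set.indicator_of_mem hω, Set.indicator_of_mem hωB, hgω]
          · simp [Set.indicator_of_notMem hω]
        rw [hnest]
        -- find β with rC - ε < β and I_C (f - β) ∈ R
        have hlt : ((rC - ε : ℝ) : EReal) < lowPrev R C f := by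
          rw [hrC]
          exact_mod_cast sub_lt_self rC hε
        rw [lowPrev, lt_sSup_iff] at hlt
        obtain ⟨b, ⟨β, hβmem, rfl⟩, hβlt⟩ := hlt
        simp only [Set.mem_setOf_eq] at hβmem
        have hβlt' : rC - ε < β := EReal.coe_lt_coe_iff.mp hβlt
        have hsplit : C.indicator (fun ω => f ω - rC + ε) =
            C.indicator (fun ω => f ω - β) + C.indicator (fun _ => β - (rC - ε)) := by
          funext ω
          by_cases hω : ω ∈ C
          · simp only [Pi.add_apply, Set.indicator_of_mem hω]
            ring
          · simp [Set.indicator_of_notMem hω]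
        rw [hsplit]
        apply hR.2.2.1 _ _ hβmem
        apply hR.2.1
        intro ω
        by_cases hω : ω ∈ C
        · simp only [Set.indicator_of_mem hω, Pi.zero_apply]
          linarith
        · simp [Set.indicator_of_notMem hω]
      · -- C ⊆ Bᶜ
        have : C.indicator (B.indicator (fun ω => f ω - g ω + ε)) = 0 := by
          funext ω
          by_cases hω : ω ∈ C
          · have hωB : ω ∉ B := hsub hω
            simp [Set.indicator_of_mem hω, Set.indicator_of_notMem hωB]
          · simp [Set.indicator_of_notMem hω]
        rw [this]
        exact hR.2.1 0 le_rfl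
    have hsum : B.indicator (fun ω => f ω - (α - ε)) =
        B.indicator (fun ω => f ω - g ω + ε) + B.indicator (fun ω => g ω - α) := by
      funext ω
      by_cases hω : ω ∈ B
      · simp only [Pi.add_apply, Set.indicator_of_mem hω]
        ring
      · simp [Set.indicator_of_notMem hω]
    rw [hsum]
    exact hR.2.2.1 _ _ hφ hα
  have : ((α - ε : ℝ) : EReal) ≤ lowPrev R B f :=
    le_sSup ⟨α - ε, key, rfl⟩
  rw [hr] at this
  exact_mod_cast this
end

section
/- Let n ≥ 1, B > 0, 0 < ε < B, and let x₁,…,xₙ be reals with |xₛ| ≤ B for all s, and suppose (1/n)·Σ_{s=1}^{n} xₛ > ε. Then with δ = ε/(2B²), Σ_{s=1}^{n} ln(1+δxₛ) > n·δ·(ε − B²δ) = n·ε²/(4B²). -/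
/-! Since `|δ xₛ| ≤ δB = ε/(2B) < 1/2`, the Taylor bound `ln(1+y) ≥ y − y²` applies to every summand,
so `Σ ln(1+δxₛ) ≥ δ Σ xₛ − nδ²B² > n(δε − δ²B²)`; the choice `δ = ε/(2B²)` maximises `δε − δ²B²`. -/

open Finset

namespace Real

theorem abs_log_one_add_sub_self_le {y : ℝ} (hy : |y| < 1) :
    |log (1 + y) - y| ≤ y ^ 2 * (1 - |y|)⁻¹ / 2 := by
  have hlog : Complex.log (1 + y) = (log (1 + y) : ℂ) := by
    rw [Complex.ofReal_log (by linarith [neg_abs_le y]), Complex.ofReal_add, Complex.ofReal_one]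
  have h := Complex.norm_log_one_add_sub_self_le (z := y) (by simpa using hy)
  rw [hlog, ← Complex.ofReal_sub, Complex.norm_real, Complex.norm_real, Real.norm_eq_abs,
    Real.norm_eq_abs, sq_abs] at h
  exact h

theorem sub_sq_le_log_one_add {y : ℝ} (hy : |y| ≤ 1 / 2) : y - y ^ 2 ≤ log (1 + y) := by
  have hbound : y ^ 2 * (1 - |y|)⁻¹ / 2 ≤ y ^ 2 := by
    have hinv : (1 - |y|)⁻¹ ≤ 2 := inv_le_of_inv_le₀ (by norm_num) (by linarith)
    rw [mul_div_assoc]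
    exact mul_le_of_le_one_right (sq_nonneg y) (by linarith)
  linarith [(abs_le.1 ((abs_log_one_add_sub_self_le (by linarith)).trans hbound)).1]

end Real

theorem mul_sum_sub_le_sum_log_one_add_mul {ι : Type*} {s : Finset ι} {x : ι → ℝ} {δ B : ℝ}
    (hδ : 0 ≤ δ) (hδB : δ * B ≤ 1 / 2) (hx : ∀ i ∈ s, |x i| ≤ B) :
    δ * ∑ i ∈ s, x i - #s * (δ ^ 2 * B ^ 2) ≤ ∑ i ∈ s, Real.log (1 + δ * x i) := by
  have hterm : ∀ i ∈ s, δ * x i - δ ^ 2 * B ^ 2 ≤ Real.log (1 + δ * x i) := by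
    intro i hi
    have hδx : |δ * x i| ≤ δ * B := by
      rw [abs_mul, abs_of_nonneg hδ]
      exact mul_le_mul_of_nonneg_left (hx i hi) hδ
    have hsq : (δ * x i) ^ 2 ≤ δ ^ 2 * B ^ 2 := by
      rw [← mul_pow, ← sq_abs]
      exact pow_le_pow_left₀ (abs_nonneg _) hδx 2
    linarith [Real.sub_sq_le_log_one_add (hδx.trans hδB)]
  calc δ * ∑ i ∈ s, x i - #s * (δ ^ 2 * B ^ 2)
      = ∑ i ∈ s, (δ * x i - δ ^ 2 * B ^ 2) := by
        rw [sum_sub_distrib, mul_sum, sum_const, nsmul_eq_mul]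
    _ ≤ ∑ i ∈ s, Real.log (1 + δ * x i) := sum_le_sum hterm

/-- Core estimate in the weak law of large numbers: if `|xₛ| ≤ B`, the average of the
`xₛ` exceeds `ε`, and `δ = ε/(2B²)`, then `Σ ln(1+δxₛ) > nδ(ε - B²δ) = nε²/(4B²)`. -/
theorem weak_law_core_estimate (n : ℕ) (hn : 1 ≤ n) (B ε : ℝ)
    (hB : 0 < B) (hε0 : 0 < ε) (hεB : ε < B) (x : ℕ → ℝ)
    (hx : ∀ s ∈ range n, |x s| ≤ B)
    (havg : ε < (1 / (n : ℝ)) * ∑ s ∈ range n, x s) :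
    (n : ℝ) * (ε / (2 * B^2)) * (ε - B^2 * (ε / (2 * B^2)))
        < ∑ s ∈ range n, Real.log (1 + (ε / (2 * B^2)) * x s) ∧
    (n : ℝ) * (ε / (2 * B^2)) * (ε - B^2 * (ε / (2 * B^2))) = (n : ℝ) * ε^2 / (4 * B^2) := by
  set δ := ε / (2 * B ^ 2) with hδ
  have hδ0 : 0 < δ := by positivity
  have hδB : δ * B ≤ 1 / 2 := by
    rw [hδ, div_mul_eq_mul_div, div_le_iff₀ (by positivity)]
    nlinarith
  have hsum : n * ε < ∑ s ∈ range n, x s := by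
    rw [one_div, lt_inv_mul_iff₀ (by exact_mod_cast hn)] at havg
    linarith
  have hlog_sum := mul_sum_sub_le_sum_log_one_add_mul hδ0.le hδB hx
  rw [card_range] at hlog_sum
  refine ⟨?_, by rw [hδ]; field_simp; ring⟩
  calc (n : ℝ) * δ * (ε - B ^ 2 * δ) = δ * (n * ε) - n * (δ ^ 2 * B ^ 2) := by ring
    _ < δ * ∑ s ∈ range n, x s - n * (δ ^ 2 * B ^ 2) := by gcongr
    _ ≤ _ := hlog_sum
end
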